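/- Let R be a reduced root system with base Π and positive roots R_+, and let 𝒦 = 𝒦(Π) be the cascade. Then R_+ is the disjoint union of the sets Γ^K = {α ∈ R^K : ⟨α, ε_K^∨⟩ > 0} for K ∈ 𝒦. -/

import Mathlib

open Finset Module

open scoped Classical

/-!
A positive root of `R^S` is supported on a single connected component of `S`: peeling simple
roots off a root supported on two components would eventually produce a root of mixed sign.
For connected `S` with highest root `ε`, every positive root `α` of `R^S` has `⟨α, ε^∨⟩ ≥ 0`,
with equality exactly when `α` is supported on `{a ∈ S : ⟨a, ε^∨⟩ = 0}`, a proper subset of `S`.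
So `R₊^S` is the disjoint union of `Γ^S` and the positive roots of that subset, and induction on
`|S|` along the recursive definition of the cascade partitions `R₊`.
-/

/-- A reduced crystallographic root system in the `k`-vector space `V`, recorded through
the finite set `roots` of roots, the coroot linear forms `corootForm α = ⟨·, α^∨⟩`, and
the integer Cartan pairing `pairInt β α = ⟨β, α^∨⟩ ∈ ℤ` (meaningful when `α, β` are roots). -/
structure RootSystemData (k V : Type*) [Field k] [CharZero k]
    [AddCommGroup V] [Module k V] where
  /-- the (finite) set of roots -/
  roots : Finset V
  /-- `corootForm α` is the linear form `⟨·, α^∨⟩` associated to the coroot of a root `α` -/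
  corootForm : V → V →ₗ[k] k
  /-- the integer `⟨β, α^∨⟩`, recorded as `pairInt β α` -/
  pairInt : V → V → ℤ
  ne_zero : ∀ α ∈ roots, α ≠ (0 : V)
  span_eq_top : Submodule.span k (roots : Set V) = ⊤
  pair_compat : ∀ α ∈ roots, ∀ β ∈ roots, ((pairInt β α : ℤ) : k) = corootForm α β
  pair_self : ∀ α ∈ roots, pairInt α α = 2
  reflect_mem : ∀ α ∈ roots, ∀ β ∈ roots, β - pairInt β α • α ∈ roots
  reduced : ∀ α ∈ roots, ∀ c : k, c • α ∈ roots → c = 1 ∨ c = -1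

namespace RootSystemData

variable {k V : Type*} [Field k] [CharZero k] [AddCommGroup V] [Module k V]
variable (P : RootSystemData k V)

/-- A base (set of simple roots) of the root system: a linearly independent set of roots
such that every root is a nonnegative or nonpositive integral combination of its elements. -/
structure IsBase (B : Finset V) : Prop where
  subset : B ⊆ P.roots
  indep : LinearIndependent k (fun b : B => (b : V))
  pos_or_neg : ∀ α ∈ P.roots,
    α ∈ AddSubmonoid.closure (B : Set V) ∨ -α ∈ AddSubmonoid.closure (B : Set V)

/-- The positive roots `R₊` with respect to a base `B`. -/
noncomputable def posRoots (B : Finset V) : Finset V :=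
  P.roots.filter fun α => α ∈ AddSubmonoid.closure (B : Set V)

/-- `R^S = R ∩ ℤS`. -/
noncomputable def rootsOf (S : Finset V) : Finset V :=
  P.roots.filter fun α => α ∈ AddSubgroup.closure (S : Set V)

/-- `R₊^S = R ∩ ℕS`. -/
noncomputable def posRootsOf (S : Finset V) : Finset V :=
  P.roots.filter fun α => α ∈ AddSubmonoid.closure (S : Set V)

/-- Two simple roots are linked in the Dynkin diagram of `S ⊆ Δ` when they can be joined
by a chain in `S` of consecutively non-orthogonal elements. -/
def Linked (S : Finset V) : V → V → Prop :=
  Relation.ReflTransGen fun a b => a ∈ S ∧ b ∈ S ∧ P.pairInt a b ≠ 0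

/-- A subset of a base is connected if its Dynkin diagram is connected (and nonempty). -/
def IsConnected (S : Finset V) : Prop :=
  S.Nonempty ∧ ∀ a ∈ S, ∀ b ∈ S, P.Linked S a b

/-- `ε` is the highest root of `R^S`: a positive root of `R^S` such that `ε - α ∈ ℕS`
for every root `α ∈ R^S`. -/
def IsHighestRoot (S : Finset V) (ε : V) : Prop :=
  ε ∈ P.posRootsOf S ∧ ∀ α ∈ P.rootsOf S, ε - α ∈ AddSubmonoid.closure (S : Set V)

/-- The highest root `ε_S` of `R^S` (junk value `0` if it does not exist). -/
noncomputable def highestRoot (S : Finset V) : V :=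
  if h : ∃ ε, P.IsHighestRoot S ε then h.choose else 0

/-- The connected component of `a` in the Dynkin diagram of `S`. -/
noncomputable def component (S : Finset V) (a : V) : Finset V :=
  S.filter fun b => P.Linked S a b

/-- The connected components of the Dynkin diagram of `S`. -/
noncomputable def components (S : Finset V) : Finset (Finset V) :=
  S.image fun a => P.component S a

/-- `{α ∈ S : ⟨α, ε_S^∨⟩ = 0}`. -/
noncomputable def zeroPart (S : Finset V) : Finset V :=
  S.filter fun a => P.pairInt a (P.highestRoot S) = 0

/-- Fuel-based auxiliary recursion for the cascade `𝒦(S)`; for an actual root system the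
recursion terminates in at most `card S` steps, so fuel `card S + 1` computes `𝒦(S)`. -/
noncomputable def cascadeAux : ℕ → Finset V → Finset (Finset V)
  | 0, _ => ∅
  | n + 1, S => (P.components S).biUnion fun C => insert C (cascadeAux n (P.zeroPart C))

/-- The cascade `𝒦(S)`, defined recursively by `𝒦(∅) = ∅`,
`𝒦(S) = 𝒦(S₁) ∪ ⋯ ∪ 𝒦(S_r)` if `S` has connected components `S₁, …, S_r`, and
`𝒦(S) = {S} ∪ 𝒦({α ∈ S : ⟨α, ε_S^∨⟩ = 0})` if `S` is connected. -/
noncomputable def cascade (S : Finset V) : Finset (Finset V) :=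
  P.cascadeAux (S.card + 1) S

/-- `Γ^K = {α ∈ R^K : ⟨α, ε_K^∨⟩ > 0}`. -/
noncomputable def gamma (K : Finset V) : Finset V :=
  (P.rootsOf K).filter fun α => 0 < P.pairInt α (P.highestRoot K)

end RootSystemData

section DisjointUnion

variable {α ι κ : Type*}

def IsDisjointUnion (f : ι → Finset α) (s : Finset ι) (X : Finset α) : Prop :=
  (∀ i ∈ s, f i ⊆ X) ∧ ∀ x ∈ X, ∃! i, i ∈ s ∧ x ∈ f i

variable [DecidableEq ι] {f : ι → Finset α}

lemma IsDisjointUnion.insert {s : Finset ι} {Y : Finset α} {i : ι}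
    (h : IsDisjointUnion f s Y) (hd : Disjoint (f i) Y) :
    IsDisjointUnion f (insert i s) (f i ∪ Y) := by
  refine ⟨fun j hj => ?_, fun x hx => ?_⟩
  · rcases mem_insert.1 hj with rfl | hj
    · exact subset_union_left
    · exact (h.1 j hj).trans subset_union_right
  · rcases mem_union.1 hx with hxi | hxY
    · refine ⟨i, ⟨mem_insert_self i s, hxi⟩, fun j ⟨hj, hxj⟩ => ?_⟩
      rcases mem_insert.1 hj with rfl | hj
      · rfl
      · exact absurd (h.1 j hj hxj) (disjoint_left.1 hd hxi)
    · obtain ⟨j, ⟨hj, hxj⟩, huniq⟩ := h.2 x hxY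
      refine ⟨j, ⟨mem_insert_of_mem hj, hxj⟩, fun l ⟨hl, hxl⟩ => ?_⟩
      rcases mem_insert.1 hl with rfl | hl
      · exact absurd hxY (disjoint_left.1 hd hxl)
      · exact huniq l ⟨hl, hxl⟩

lemma IsDisjointUnion.biUnion {t : Finset κ} {s : κ → Finset ι} {X : κ → Finset α}
    (h : ∀ j ∈ t, IsDisjointUnion f (s j) (X j)) (hd : (t : Set κ).PairwiseDisjoint X) :
    IsDisjointUnion f (t.biUnion s) (t.biUnion X) := by
  refine ⟨fun i hi => ?_, fun x hx => ?_⟩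
  · obtain ⟨j, hj, hi⟩ := mem_biUnion.1 hi
    exact ((h j hj).1 i hi).trans (subset_biUnion_of_mem X hj)
  · obtain ⟨j, hj, hxj⟩ := mem_biUnion.1 hx
    obtain ⟨i, ⟨hi, hxi⟩, huniq⟩ := (h j hj).2 x hxj
    refine ⟨i, ⟨mem_biUnion.2 ⟨j, hj, hi⟩, hxi⟩, fun l ⟨hl, hxl⟩ => ?_⟩
    obtain ⟨j', hj', hl⟩ := mem_biUnion.1 hl
    obtain rfl : j' = j := hd.elim_finset hj' hj x ((h j' hj').1 l hl hxl) hxj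
    exact huniq l ⟨hl, hxl⟩

end DisjointUnion

lemma Relation.ReflTransGen.exists_rel_of_not {α : Type*} {r : α → α → Prop} {p : α → Prop}
    {a b : α} (h : Relation.ReflTransGen r a b) (ha : p a) (hb : ¬p b) :
    ∃ x y, r x y ∧ p x ∧ ¬p y := by
  induction h with
  | refl => exact absurd ha hb
  | @tail c b _ hcb ih => exact if hc : p c then ⟨c, b, hcb, hc, hb⟩ else ih hc

section BaseCoordinates

variable {M : Type*} [AddCommGroup M] {Δ S : Finset M} {x y : M}

lemma mem_addSubgroupClosure_finset_iff :
    x ∈ AddSubgroup.closure (S : Set M) ↔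
      ∃ c : M → ℤ, c.support ⊆ S ∧ ∑ a ∈ S, c a • a = x := by
  rw [← Submodule.span_int_eq_addSubgroupClosure, Submodule.mem_toAddSubgroup,
    Submodule.mem_span_finset]

/-- Junk value `0` outside `ℤΔ`. -/
noncomputable def baseCoord (Δ : Finset M) (x : M) : M → ℤ :=
  if h : ∃ c : M → ℤ, c.support ⊆ Δ ∧ ∑ a ∈ Δ, c a • a = x then h.choose else 0

lemma support_baseCoord_subset : (baseCoord Δ x).support ⊆ Δ := by
  unfold baseCoord
  split_ifs with h
  · exact h.choose_spec.1
  · simp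

lemma baseCoord_eq_zero_of_notMem {a : M} (ha : a ∉ Δ) : baseCoord Δ x a = 0 :=
  Function.notMem_support.1 fun h => ha (support_baseCoord_subset h)

lemma sum_baseCoord_smul (hx : x ∈ AddSubgroup.closure (Δ : Set M)) :
    ∑ a ∈ Δ, baseCoord Δ x a • a = x := by
  have h := mem_addSubgroupClosure_finset_iff.1 hx
  rw [baseCoord, dif_pos h]
  exact h.choose_spec.2

lemma eq_zero_of_baseCoord_eq_zero (hx : x ∈ AddSubgroup.closure (Δ : Set M))
    (h : baseCoord Δ x = 0) : x = 0 := by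
  rw [← sum_baseCoord_smul hx, h]
  simp

lemma baseCoord_eq (hΔ : LinearIndepOn ℤ id (Δ : Set M)) {c : M → ℤ}
    (hc : c.support ⊆ Δ) (hx : ∑ a ∈ Δ, c a • a = x) : baseCoord Δ x = c := by
  have hmem : x ∈ AddSubgroup.closure (Δ : Set M) :=
    mem_addSubgroupClosure_finset_iff.2 ⟨c, hc, hx⟩
  funext a
  by_cases ha : a ∈ Δ
  · refine linearIndepOn_finset_iffₛ.1 hΔ _ _ ?_ a ha
    simpa [hx] using sum_baseCoord_smul hmem
  · rw [baseCoord_eq_zero_of_notMem ha, Function.notMem_support.1 fun h => ha (hc h)]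

lemma baseCoord_add (hΔ : LinearIndepOn ℤ id (Δ : Set M))
    (hx : x ∈ AddSubgroup.closure (Δ : Set M)) (hy : y ∈ AddSubgroup.closure (Δ : Set M)) :
    baseCoord Δ (x + y) = baseCoord Δ x + baseCoord Δ y :=
  baseCoord_eq hΔ ((Function.support_add _ _).trans
      (Set.union_subset support_baseCoord_subset support_baseCoord_subset))
    (by simp only [Pi.add_apply, add_smul, sum_add_distrib, sum_baseCoord_smul hx,
      sum_baseCoord_smul hy])

lemma baseCoord_neg (hΔ : LinearIndepOn ℤ id (Δ : Set M))
    (hx : x ∈ AddSubgroup.closure (Δ : Set M)) : baseCoord Δ (-x) = -baseCoord Δ x :=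
  baseCoord_eq hΔ (by rw [Function.support_neg]; exact support_baseCoord_subset)
    (by simp only [Pi.neg_apply, neg_smul, sum_neg_distrib, sum_baseCoord_smul hx])

lemma baseCoord_sub (hΔ : LinearIndepOn ℤ id (Δ : Set M))
    (hx : x ∈ AddSubgroup.closure (Δ : Set M)) (hy : y ∈ AddSubgroup.closure (Δ : Set M)) :
    baseCoord Δ (x - y) = baseCoord Δ x - baseCoord Δ y := by
  rw [sub_eq_add_neg, baseCoord_add hΔ hx (neg_mem hy), baseCoord_neg hΔ hy, sub_eq_add_neg]

lemma baseCoord_of_mem (hΔ : LinearIndepOn ℤ id (Δ : Set M)) {a : M} (ha : a ∈ Δ) :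
    baseCoord Δ a = Pi.single a 1 :=
  baseCoord_eq hΔ (Pi.support_single_subset.trans (by simpa using ha))
    (by simp [Pi.single_apply, ite_smul, ha])

lemma mem_addSubgroupClosure_iff_baseCoord (hΔ : LinearIndepOn ℤ id (Δ : Set M))
    (hS : S ⊆ Δ) :
    x ∈ AddSubgroup.closure (S : Set M) ↔
      x ∈ AddSubgroup.closure (Δ : Set M) ∧ (baseCoord Δ x).support ⊆ S := by
  refine ⟨fun hx => ?_, fun ⟨hx, hsupp⟩ => ?_⟩
  · obtain ⟨c, hc, rfl⟩ := mem_addSubgroupClosure_finset_iff.1 hx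
    have hsum : ∑ a ∈ Δ, c a • a = ∑ a ∈ S, c a • a :=
      (sum_subset hS fun a _ haS => by
        rw [Function.notMem_support.1 fun h => haS (hc h), zero_smul]).symm
    refine ⟨AddSubgroup.closure_mono (coe_subset.2 hS) hx, ?_⟩
    rw [baseCoord_eq hΔ (hc.trans (coe_subset.2 hS)) hsum]
    exact hc
  · refine mem_addSubgroupClosure_finset_iff.2 ⟨baseCoord Δ x, hsupp, ?_⟩
    refine (sum_subset hS fun a _ haS => ?_).trans (sum_baseCoord_smul hx)
    rw [Function.notMem_support.1 fun h => haS (hsupp h), zero_smul]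

lemma mem_addSubmonoidClosure_iff_baseCoord (hΔ : LinearIndepOn ℤ id (Δ : Set M))
    (hS : S ⊆ Δ) :
    x ∈ AddSubmonoid.closure (S : Set M) ↔
      x ∈ AddSubgroup.closure (S : Set M) ∧ 0 ≤ baseCoord Δ x := by
  refine ⟨fun hx => ?_, fun ⟨hx, hpos⟩ => ?_⟩
  · obtain ⟨f, hf, rfl⟩ := AddSubmonoid.mem_closure_finset.1 hx
    refine ⟨sum_mem fun a ha => nsmul_mem (AddSubgroup.subset_closure ha) _, ?_⟩
    rw [baseCoord_eq hΔ (c := fun a => f a)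
      (fun a ha => coe_subset.2 hS (hf (by simpa using ha))) ?_]
    · exact fun a => Int.natCast_nonneg _
    · simp only [natCast_zsmul]
      exact (sum_subset hS fun a _ haS => by
        rw [Function.notMem_support.1 fun h => haS (hf h), zero_smul]).symm
  · have hsupp := ((mem_addSubgroupClosure_iff_baseCoord hΔ hS).1 hx).2
    refine AddSubmonoid.mem_closure_finset.2
      ⟨fun a => (baseCoord Δ x a).toNat, fun a ha => hsupp fun h => ha (by simp [h]), ?_⟩
    calc ∑ a ∈ S, (baseCoord Δ x a).toNat • a = ∑ a ∈ S, baseCoord Δ x a • a :=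
          sum_congr rfl fun a _ => by rw [← natCast_zsmul, Int.toNat_of_nonneg (hpos a)]
      _ = ∑ a ∈ Δ, baseCoord Δ x a • a := sum_subset hS fun a _ haS => by
          rw [Function.notMem_support.1 fun h => haS (hsupp h), zero_smul]
      _ = x := sum_baseCoord_smul ((mem_addSubgroupClosure_iff_baseCoord hΔ hS).1 hx).1

lemma mem_of_baseCoord_ne_zero (hΔ : LinearIndepOn ℤ id (Δ : Set M)) (hS : S ⊆ Δ)
    (hx : x ∈ AddSubgroup.closure (S : Set M)) {a : M} (ha : baseCoord Δ x a ≠ 0) : a ∈ S :=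
  ((mem_addSubgroupClosure_iff_baseCoord hΔ hS).1 hx).2 ha

lemma baseCoord_eq_zero_of_mem_closure (hΔ : LinearIndepOn ℤ id (Δ : Set M)) (hS : S ⊆ Δ)
    (hx : x ∈ AddSubgroup.closure (S : Set M)) {a : M} (ha : a ∉ S) : baseCoord Δ x a = 0 :=
  not_imp_comm.1 (mem_of_baseCoord_ne_zero hΔ hS hx) ha

lemma sub_mem_addSubmonoidClosure (hΔ : LinearIndepOn ℤ id (Δ : Set M)) (hS : S ⊆ Δ)
    (hx : x ∈ AddSubmonoid.closure (S : Set M)) {a : M} (ha : a ∈ S) (hxa : 0 < baseCoord Δ x a) :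
    x - a ∈ AddSubmonoid.closure (S : Set M) := by
  obtain ⟨hxS, hpos⟩ := (mem_addSubmonoidClosure_iff_baseCoord hΔ hS).1 hx
  refine (mem_addSubmonoidClosure_iff_baseCoord hΔ hS).2
    ⟨sub_mem hxS (AddSubgroup.subset_closure ha), fun b => ?_⟩
  rw [baseCoord_sub hΔ (AddSubgroup.closure_mono (coe_subset.2 hS) hxS)
    (AddSubgroup.subset_closure (hS ha)), baseCoord_of_mem hΔ (hS ha)]
  rcases eq_or_ne b a with rfl | hba
  · simp only [Pi.zero_apply, Pi.sub_apply, Pi.single_eq_same, sub_nonneg]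
    exact hxa
  · simpa [hba] using hpos b

lemma eq_zero_of_mem_closure_of_neg_mem (hΔ : LinearIndepOn ℤ id (Δ : Set M))
    (hx : x ∈ AddSubmonoid.closure (Δ : Set M)) (hnx : -x ∈ AddSubmonoid.closure (Δ : Set M)) :
    x = 0 := by
  obtain ⟨hxZ, hpos⟩ := (mem_addSubmonoidClosure_iff_baseCoord hΔ subset_rfl).1 hx
  have hneg := ((mem_addSubmonoidClosure_iff_baseCoord hΔ subset_rfl).1 hnx).2
  rw [baseCoord_neg hΔ hxZ, neg_nonneg] at hneg
  exact eq_zero_of_baseCoord_eq_zero hxZ (le_antisymm hneg hpos)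

lemma eq_zero_of_mem_closure_of_disjoint (hΔ : LinearIndepOn ℤ id (Δ : Set M)) {T : Finset M}
    (hS : S ⊆ Δ) (hT : T ⊆ Δ) (hST : Disjoint S T) (hxS : x ∈ AddSubgroup.closure (S : Set M))
    (hxT : x ∈ AddSubgroup.closure (T : Set M)) : x = 0 := by
  obtain ⟨hx, hsuppS⟩ := (mem_addSubgroupClosure_iff_baseCoord hΔ hS).1 hxS
  have hsuppT := ((mem_addSubgroupClosure_iff_baseCoord hΔ hT).1 hxT).2
  refine eq_zero_of_baseCoord_eq_zero hx (funext fun a => ?_)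
  by_contra ha
  exact disjoint_left.1 hST (hsuppS ha) (hsuppT ha)

noncomputable def baseHeight (Δ : Finset M) (x : M) : ℤ :=
  ∑ a ∈ Δ, baseCoord Δ x a

lemma baseHeight_nonneg (hΔ : LinearIndepOn ℤ id (Δ : Set M))
    (hx : x ∈ AddSubmonoid.closure (Δ : Set M)) : 0 ≤ baseHeight Δ x :=
  sum_nonneg fun a _ => ((mem_addSubmonoidClosure_iff_baseCoord hΔ subset_rfl).1 hx).2 a

lemma baseHeight_lt_of_sub_mem (hΔ : LinearIndepOn ℤ id (Δ : Set M))
    (hx : x ∈ AddSubgroup.closure (Δ : Set M)) (hy : y ∈ AddSubgroup.closure (Δ : Set M))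
    (hxy : y - x ∈ AddSubmonoid.closure (Δ : Set M)) (hne : x ≠ y) :
    baseHeight Δ x < baseHeight Δ y := by
  obtain ⟨hxyZ, hpos⟩ := (mem_addSubmonoidClosure_iff_baseCoord hΔ subset_rfl).1 hxy
  rw [baseCoord_sub hΔ hy hx, sub_nonneg] at hpos
  obtain ⟨a, ha⟩ : ∃ a, baseCoord Δ (y - x) a ≠ 0 := by
    by_contra! h
    exact hne (sub_eq_zero.1 (eq_zero_of_baseCoord_eq_zero hxyZ (funext h))).symm
  have haΔ : a ∈ Δ := support_baseCoord_subset ha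
  rw [baseCoord_sub hΔ hy hx, Pi.sub_apply, sub_ne_zero] at ha
  exact sum_lt_sum (fun b _ => hpos b) ⟨a, haΔ, lt_of_le_of_ne (hpos a) (Ne.symm ha)⟩

end BaseCoordinates

namespace RootSystemData

variable {k V : Type*} [Field k] [CharZero k] [AddCommGroup V] [Module k V]
variable (P : RootSystemData k V)

section RootPairing

lemma corootForm_apply_self {α : V} (hα : α ∈ P.roots) : P.corootForm α α = 2 := by
  rw [← P.pair_compat α hα α hα, P.pair_self α hα, Int.cast_ofNat]

lemma mapsTo_preReflection {α : V} (hα : α ∈ P.roots) :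
    Set.MapsTo (preReflection α (P.corootForm α)) P.roots P.roots := by
  intro β hβ
  rw [preReflection_apply, ← P.pair_compat α hα β hβ, Int.cast_smul_eq_zsmul]
  exact P.reflect_mem α hα β hβ

lemma injOn_corootForm : Set.InjOn P.corootForm P.roots := fun _ hα _ hβ h =>
  have : IsAddTorsionFree V := .of_isTorsionFree k V
  eq_of_mapsTo_reflection_of_mem P.roots.finite_toSet (P.corootForm_apply_self hα)
    (P.corootForm_apply_self hβ) (h ▸ P.corootForm_apply_self hα)
    (h ▸ P.corootForm_apply_self hβ) (P.mapsTo_preReflection hα) (P.mapsTo_preReflection hβ) hβ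

lemma finiteDimensional (P : RootSystemData k V) : FiniteDimensional k V :=
  Module.Finite.of_fg_top (P.span_eq_top ▸ Submodule.fg_span P.roots.finite_toSet)

noncomputable def toRootPairing : RootPairing P.roots k V (Dual k V) :=
  have := P.finiteDimensional
  RootPairing.mk'' (Dual.eval k V) (Function.Embedding.subtype _)
    ⟨fun α => P.corootForm α, fun α β h => Subtype.ext (P.injOn_corootForm α.2 β.2 h)⟩
    (fun α => P.corootForm_apply_self α.2)
    (fun α => by
      change Set.MapsTo (preReflection α.1 (P.corootForm α.1)) (Set.range Subtype.val) _
      simpa using P.mapsTo_preReflection α.2)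
    (by simpa using P.span_eq_top)

@[simp]
lemma toRootPairing_root (α : P.roots) : P.toRootPairing.root α = α := rfl

lemma toRootPairing_pairing (α β : P.roots) :
    P.toRootPairing.pairing α β = P.pairInt α β :=
  (P.pair_compat β β.2 α α.2).symm

instance : P.toRootPairing.IsCrystallographic :=
  ⟨fun α β => ⟨P.pairInt α β, (P.toRootPairing_pairing α β).symm⟩⟩

lemma toRootPairing_pairingIn (α β : P.roots) :
    P.toRootPairing.pairingIn ℤ α β = P.pairInt α β := by
  apply (algebraMap ℤ k).injective_int
  rw [RootPairing.algebraMap_pairingIn, toRootPairing_pairing]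
  rfl

lemma sub_mem_roots {α β : V} (hα : α ∈ P.roots) (hβ : β ∈ P.roots) (hne : β ≠ α)
    (h : 0 < P.pairInt β α) : β - α ∈ P.roots := by
  obtain ⟨γ, hγ⟩ := P.toRootPairing.root_sub_root_mem_of_pairingIn_pos (i := ⟨β, hβ⟩)
    (j := ⟨α, hα⟩) (by rwa [toRootPairing_pairingIn]) (by simpa using hne)
  simp only [toRootPairing_root] at hγ
  exact hγ ▸ γ.2

lemma add_mem_roots {α β : V} (hα : α ∈ P.roots) (hβ : β ∈ P.roots) (hne : β ≠ -α)
    (h : P.pairInt β α < 0) : β + α ∈ P.roots := by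
  obtain ⟨γ, hγ⟩ := P.toRootPairing.root_add_root_mem_of_pairingIn_neg (i := ⟨β, hβ⟩)
    (j := ⟨α, hα⟩) (by rwa [toRootPairing_pairingIn]) (by simpa using hne)
  simp only [toRootPairing_root] at hγ
  exact hγ ▸ γ.2

lemma pairInt_pos_comm {α β : V} (hα : α ∈ P.roots) (hβ : β ∈ P.roots) :
    0 < P.pairInt α β ↔ 0 < P.pairInt β α := by
  simpa only [toRootPairing_pairingIn] using
    P.toRootPairing.zero_lt_pairingIn_iff' ℤ (i := ⟨α, hα⟩) (j := ⟨β, hβ⟩)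

lemma pairInt_eq_zero_comm {α β : V} (hα : α ∈ P.roots) (hβ : β ∈ P.roots) :
    P.pairInt α β = 0 ↔ P.pairInt β α = 0 := by
  simpa only [toRootPairing_pairing, Int.cast_eq_zero] using
    P.toRootPairing.pairing_eq_zero_iff' (i := ⟨α, hα⟩) (j := ⟨β, hβ⟩)

lemma pairInt_nonneg_comm {α β : V} (hα : α ∈ P.roots) (hβ : β ∈ P.roots) :
    0 ≤ P.pairInt α β ↔ 0 ≤ P.pairInt β α := by
  simp only [le_iff_lt_or_eq, P.pairInt_pos_comm hα hβ, eq_comm (a := (0 : ℤ)),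
    P.pairInt_eq_zero_comm hα hβ]

end RootPairing

lemma neg_mem_roots {α : V} (hα : α ∈ P.roots) : -α ∈ P.roots := by
  simpa [P.pair_self α hα, two_zsmul] using P.reflect_mem α hα α hα

lemma pairInt_neg_left {α β : V} (hα : α ∈ P.roots) (hβ : β ∈ P.roots) :
    P.pairInt (-β) α = -P.pairInt β α := by
  apply Int.cast_injective (α := k)
  rw [Int.cast_neg, P.pair_compat α hα _ (P.neg_mem_roots hβ), P.pair_compat α hα β hβ, map_neg]

lemma pairInt_add_left {α β γ : V} (hα : α ∈ P.roots) (hβ : β ∈ P.roots) (hγ : γ ∈ P.roots)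
    (hβγ : β + γ ∈ P.roots) : P.pairInt (β + γ) α = P.pairInt β α + P.pairInt γ α := by
  apply Int.cast_injective (α := k)
  rw [Int.cast_add, P.pair_compat α hα _ hβγ, P.pair_compat α hα β hβ, P.pair_compat α hα γ hγ,
    map_add]

lemma pairInt_eq_sum_baseCoord {Δ : Finset V} (hΔ : Δ ⊆ P.roots) {α β : V}
    (hα : α ∈ P.roots) (hβ : β ∈ P.roots) (hβΔ : β ∈ AddSubgroup.closure (Δ : Set V)) :
    P.pairInt β α = ∑ a ∈ Δ, baseCoord Δ β a * P.pairInt a α := by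
  apply Int.cast_injective (α := k)
  rw [P.pair_compat α hα β hβ]
  conv_lhs => rw [← sum_baseCoord_smul hβΔ]
  push_cast
  simp only [map_sum, map_zsmul, zsmul_eq_mul]
  exact sum_congr rfl fun a ha => by rw [P.pair_compat α hα a (hΔ ha)]

section Base

variable {P} {Δ : Finset V}

lemma IsBase.linearIndepOn_int (hb : P.IsBase Δ) : LinearIndepOn ℤ id (Δ : Set V) :=
  hb.indep.restrict_scalars' ℤ

lemma IsBase.mem_addSubgroupClosure (hb : P.IsBase Δ) {α : V} (hα : α ∈ P.roots) :
    α ∈ AddSubgroup.closure (Δ : Set V) := by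
  rcases hb.pos_or_neg α hα with h | h
  · exact AddSubgroup.le_closure_toAddSubmonoid _ h
  · simpa using AddSubgroup.le_closure_toAddSubmonoid _ h

lemma IsBase.baseCoord_nonneg (hb : P.IsBase Δ) {α : V}
    (hα : α ∈ AddSubmonoid.closure (Δ : Set V)) (a : V) : 0 ≤ baseCoord Δ α a :=
  ((mem_addSubmonoidClosure_iff_baseCoord hb.linearIndepOn_int subset_rfl).1 hα).2 a

lemma IsBase.mem_posRootsOf_or_neg_mem (hb : P.IsBase Δ) {S : Finset V} (hS : S ⊆ Δ) {α : V}
    (hα : α ∈ P.rootsOf S) : α ∈ P.posRootsOf S ∨ -α ∈ P.posRootsOf S := by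
  obtain ⟨hαR, hαS⟩ := mem_filter.1 hα
  simp only [posRootsOf, mem_filter, mem_addSubmonoidClosure_iff_baseCoord hb.linearIndepOn_int hS]
  rcases hb.pos_or_neg α hαR with h | h
  · exact Or.inl ⟨hαR, hαS, hb.baseCoord_nonneg h⟩
  · exact Or.inr ⟨P.neg_mem_roots hαR, neg_mem hαS, hb.baseCoord_nonneg h⟩

lemma IsBase.ne_neg (hb : P.IsBase Δ) {α β : V} (hα : α ∈ P.roots)
    (hαΔ : α ∈ AddSubmonoid.closure (Δ : Set V)) (hβΔ : β ∈ AddSubmonoid.closure (Δ : Set V)) :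
    α ≠ -β := by
  rintro rfl
  exact P.ne_zero _ hα
    (eq_zero_of_mem_closure_of_neg_mem hb.linearIndepOn_int hαΔ (by rwa [neg_neg]))

lemma IsBase.exists_pairInt_pos (hb : P.IsBase Δ) {α : V} (hα : α ∈ P.roots)
    (hαΔ : α ∈ AddSubmonoid.closure (Δ : Set V)) :
    ∃ a, 0 < baseCoord Δ α a ∧ 0 < P.pairInt a α := by
  have hsum : ∑ a ∈ Δ, baseCoord Δ α a * P.pairInt a α = 2 := by
    rw [← P.pairInt_eq_sum_baseCoord hb.subset hα hα (hb.mem_addSubgroupClosure hα),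
      P.pair_self α hα]
  by_contra! h
  have : ∑ a ∈ Δ, baseCoord Δ α a * P.pairInt a α ≤ 0 := sum_nonpos fun a _ => by
    rcases (hb.baseCoord_nonneg hαΔ a).lt_or_eq with hlt | heq
    · exact mul_nonpos_of_nonneg_of_nonpos hlt.le (h a hlt)
    · rw [← heq, zero_mul]
  omega

lemma IsBase.sub_notMem_roots (hb : P.IsBase Δ) {T : Finset V} (hT : T ⊆ Δ) {x a : V}
    (hx : x ∈ AddSubmonoid.closure (T : Set V)) (hx0 : x ≠ 0) (ha : a ∈ Δ) (haT : a ∉ T) :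
    x - a ∉ P.roots := by
  have hΔ := hb.linearIndepOn_int
  obtain ⟨hxT, hxpos⟩ := (mem_addSubmonoidClosure_iff_baseCoord hΔ hT).1 hx
  obtain ⟨hxZ, hsupp⟩ := (mem_addSubgroupClosure_iff_baseCoord hΔ hT).1 hxT
  have hcoord : baseCoord Δ (x - a) = baseCoord Δ x - Pi.single a 1 := by
    rw [baseCoord_sub hΔ hxZ (AddSubgroup.subset_closure ha), baseCoord_of_mem hΔ ha]
  intro hroot
  rcases hb.pos_or_neg _ hroot with h | h
  · have hxa : baseCoord Δ x a = 0 := baseCoord_eq_zero_of_mem_closure hΔ hT hxT haT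
    have := hb.baseCoord_nonneg h a
    simp [hcoord, hxa] at this
  · obtain ⟨b, hxb⟩ : ∃ b, baseCoord Δ x b ≠ 0 := by
      by_contra! h
      exact hx0 (eq_zero_of_baseCoord_eq_zero hxZ (funext h))
    have hba : b ≠ a := fun h => haT (h ▸ hsupp hxb)
    have := hb.baseCoord_nonneg h b
    rw [baseCoord_neg hΔ (sub_mem hxZ (AddSubgroup.subset_closure ha)), hcoord] at this
    simp only [Pi.neg_apply, Pi.sub_apply, Pi.single_eq_of_ne hba, sub_zero, neg_nonneg] at this
    exact hxb (le_antisymm this (hxpos b))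

lemma IsBase.pairInt_nonpos (hb : P.IsBase Δ) {a b : V} (ha : a ∈ Δ) (hbΔ : b ∈ Δ)
    (hne : a ≠ b) : P.pairInt a b ≤ 0 := by
  by_contra! h
  refine hb.sub_notMem_roots (T := {a}) (by simpa) (AddSubmonoid.subset_closure (by simp))
    (P.ne_zero a (hb.subset ha)) hbΔ (by simpa using hne.symm) ?_
  exact P.sub_mem_roots (hb.subset hbΔ) (hb.subset ha) hne h

end Base

section Components

variable {P} {S : Finset V}

lemma linked_symm (hS : S ⊆ P.roots) {a b : V} (h : P.Linked S a b) : P.Linked S b a :=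
  Relation.ReflTransGen.mono (fun _ _ ⟨hy, hx, hyx⟩ =>
      ⟨hx, hy, fun h => hyx ((P.pairInt_eq_zero_comm (hS hx) (hS hy)).1 h)⟩) _ _
    (Relation.reflTransGen_swap.2 h)

lemma pairInt_eq_zero_of_mem_component {a b c : V} (hb : b ∈ P.component S c) (ha : a ∈ S)
    (hac : a ∉ P.component S c) : P.pairInt b a = 0 := by
  by_contra h
  obtain ⟨hbS, hcb⟩ := mem_filter.1 hb
  exact hac (mem_filter.2 ⟨ha, hcb.tail ⟨hbS, ha, h⟩⟩)

lemma component_eq_of_mem (hS : S ⊆ P.roots) {a b : V} (hb : b ∈ P.component S a) :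
    P.component S b = P.component S a := by
  have hab := (mem_filter.1 hb).2
  ext x
  simp only [component, mem_filter]
  exact and_congr_right fun _ => ⟨hab.trans, (linked_symm hS hab).trans⟩

lemma subset_of_mem_components {C : Finset V} (hC : C ∈ P.components S) : C ⊆ S := by
  obtain ⟨a, -, rfl⟩ := mem_image.1 hC
  exact filter_subset _ _

lemma pairwiseDisjoint_components (hS : S ⊆ P.roots) :
    (P.components S : Set (Finset V)).PairwiseDisjoint id := by
  rintro _ hC _ hC' hne
  obtain ⟨a, -, rfl⟩ := mem_image.1 hC
  obtain ⟨a', -, rfl⟩ := mem_image.1 hC'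
  refine disjoint_left.2 fun x hx hx' => hne ?_
  rw [← component_eq_of_mem hS hx, component_eq_of_mem hS hx']

lemma linked_component {a x y : V} (hx : x ∈ P.component S a) (h : P.Linked S x y) :
    P.Linked (P.component S a) x y := by
  have hax := (mem_filter.1 hx).2
  induction h with
  | refl => exact .refl
  | @tail z y hxz hzy ih =>
    have hz : z ∈ P.component S a := mem_filter.2 ⟨hzy.1, hax.trans hxz⟩
    have hy : y ∈ P.component S a := mem_filter.2 ⟨hzy.2.1, (hax.trans hxz).tail hzy⟩
    exact ih.tail ⟨hz, hy, hzy.2.2⟩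

lemma isConnected_of_mem_components (hS : S ⊆ P.roots) {C : Finset V}
    (hC : C ∈ P.components S) : P.IsConnected C := by
  obtain ⟨a, ha, rfl⟩ := mem_image.1 hC
  refine ⟨⟨a, mem_filter.2 ⟨ha, .refl⟩⟩, fun x hx y hy => linked_component hx ?_⟩
  exact (linked_symm hS (mem_filter.1 hx).2).trans (mem_filter.1 hy).2

end Components

section PositiveRoots

variable {P} {Δ S : Finset V}

lemma posRootsOf_mono {T : Finset V} (h : S ⊆ T) : P.posRootsOf S ⊆ P.posRootsOf T :=
  fun _ hα => mem_filter.2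
    ⟨(mem_filter.1 hα).1, AddSubmonoid.closure_mono (coe_subset.2 h) (mem_filter.1 hα).2⟩

lemma IsBase.disjoint_posRootsOf (hb : P.IsBase Δ) {T : Finset V} (hS : S ⊆ Δ) (hT : T ⊆ Δ)
    (hST : Disjoint S T) : Disjoint (P.posRootsOf S) (P.posRootsOf T) :=
  disjoint_left.2 fun α hαS hαT => P.ne_zero α (mem_filter.1 hαS).1 <|
    eq_zero_of_mem_closure_of_disjoint hb.linearIndepOn_int hS hT hST
      (AddSubgroup.le_closure_toAddSubmonoid _ (mem_filter.1 hαS).2)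
      (AddSubgroup.le_closure_toAddSubmonoid _ (mem_filter.1 hαT).2)

/-- Otherwise `⟨β + a, a^∨⟩ = 2`, and reflecting `β + a` in `a` gives the root `β - a`, which has
mixed sign. -/
lemma IsBase.mem_component_of_add_mem_roots (hb : P.IsBase Δ) (hS : S ⊆ Δ) {β a c : V}
    (hβ : β ∈ P.posRootsOf (P.component S c)) (ha : a ∈ S) (hβa : β + a ∈ P.roots) :
    a ∈ P.component S c := by
  by_contra hac
  have hC : P.component S c ⊆ Δ := (filter_subset _ _).trans hS
  obtain ⟨hβR, hβC⟩ := mem_filter.1 hβ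
  have haR := hb.subset (hS ha)
  have hβa0 : P.pairInt β a = 0 := by
    rw [P.pairInt_eq_sum_baseCoord hb.subset haR hβR (hb.mem_addSubgroupClosure hβR)]
    refine sum_eq_zero fun b _ => ?_
    by_cases hbC : b ∈ P.component S c
    · rw [pairInt_eq_zero_of_mem_component hbC ha hac, mul_zero]
    · rw [baseCoord_eq_zero_of_mem_closure hb.linearIndepOn_int hC
        (AddSubgroup.le_closure_toAddSubmonoid _ hβC) hbC, zero_mul]
  have hβa2 : P.pairInt (β + a) a = 2 := by
    rw [P.pairInt_add_left haR hβR haR hβa, hβa0, P.pair_self a haR, zero_add]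
  have hrefl := P.reflect_mem a haR _ hβa
  rw [hβa2, two_zsmul, add_sub_add_right_eq_sub] at hrefl
  exact hb.sub_notMem_roots hC hβC (P.ne_zero β hβR) (hS ha) hac hrefl

lemma IsBase.exists_mem_components_mem_posRootsOf (hb : P.IsBase Δ) (hS : S ⊆ Δ) {α : V}
    (hα : α ∈ P.posRootsOf S) : ∃ C ∈ P.components S, α ∈ P.posRootsOf C := by
  have hΔ := hb.linearIndepOn_int
  induction hn : (baseHeight Δ α).toNat using Nat.strong_induction_on generalizing α with
  | _ n ih =>
    obtain ⟨hαR, hαS⟩ := mem_filter.1 hα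
    have hαΔ := AddSubmonoid.closure_mono (coe_subset.2 hS) hαS
    obtain ⟨a, hαa, hpos⟩ := hb.exists_pairInt_pos hαR hαΔ
    have haS : a ∈ S :=
      mem_of_baseCoord_ne_zero hΔ hS (AddSubgroup.le_closure_toAddSubmonoid _ hαS) hαa.ne'
    have haR := hb.subset (hS haS)
    by_cases hαa' : α = a
    · subst hαa'
      exact ⟨_, mem_image_of_mem _ haS,
        mem_filter.2 ⟨hαR, AddSubmonoid.subset_closure (mem_filter.2 ⟨haS, .refl⟩)⟩⟩
    have hβR : α - a ∈ P.roots :=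
      P.sub_mem_roots haR hαR hαa' ((P.pairInt_pos_comm haR hαR).1 hpos)
    have hβS := sub_mem_addSubmonoidClosure hΔ hS hαS haS hαa
    have hlt : baseHeight Δ (α - a) < baseHeight Δ α :=
      baseHeight_lt_of_sub_mem hΔ (hb.mem_addSubgroupClosure hβR) (hb.mem_addSubgroupClosure hαR)
        (by simpa using AddSubmonoid.subset_closure (hS haS)) (by simpa using P.ne_zero a haR)
    have hβ0 := baseHeight_nonneg hΔ (AddSubmonoid.closure_mono (coe_subset.2 hS) hβS)
    obtain ⟨C, hC, hβC⟩ := ih _ (by omega) (mem_filter.2 ⟨hβR, hβS⟩) rfl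
    obtain ⟨c, -, rfl⟩ := mem_image.1 hC
    have haC := hb.mem_component_of_add_mem_roots hS hβC haS (by simpa using hαR)
    refine ⟨_, hC, mem_filter.2 ⟨hαR, ?_⟩⟩
    simpa using add_mem (mem_filter.1 hβC).2 (AddSubmonoid.subset_closure haC)

lemma IsBase.posRootsOf_eq_biUnion_components (hb : P.IsBase Δ) (hS : S ⊆ Δ) :
    P.posRootsOf S = (P.components S).biUnion P.posRootsOf := by
  ext α
  refine ⟨fun hα => mem_biUnion.2 (hb.exists_mem_components_mem_posRootsOf hS hα), fun hα => ?_⟩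
  obtain ⟨C, hC, hαC⟩ := mem_biUnion.1 hα
  exact posRootsOf_mono (subset_of_mem_components hC) hαC

lemma IsBase.pairwiseDisjoint_posRootsOf_components (hb : P.IsBase Δ) (hS : S ⊆ Δ) :
    (P.components S : Set (Finset V)).PairwiseDisjoint P.posRootsOf :=
  fun _ hC _ hC' hne => hb.disjoint_posRootsOf ((subset_of_mem_components hC).trans hS)
    ((subset_of_mem_components hC').trans hS)
    (pairwiseDisjoint_components (hS.trans hb.subset) hC hC' hne)

end PositiveRoots

section HighestRoot

def IsMaximalRoot (S : Finset V) (M : V) : Prop :=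
  M ∈ P.posRootsOf S ∧ ∀ γ ∈ P.posRootsOf S, γ - M ∈ AddSubmonoid.closure (S : Set V) → γ = M

variable {P} {Δ S : Finset V}

lemma IsBase.exists_isMaximalRoot (hb : P.IsBase Δ) (hS : S ⊆ Δ) {β : V}
    (hβ : β ∈ P.posRootsOf S) :
    ∃ M, P.IsMaximalRoot S M ∧ M - β ∈ AddSubmonoid.closure (S : Set V) := by
  obtain ⟨M, hMβ, hmax⟩ := exists_max_image
    ((P.posRootsOf S).filter fun γ => γ - β ∈ AddSubmonoid.closure (S : Set V))
    (baseHeight Δ) ⟨β, mem_filter.2 ⟨hβ, by simp⟩⟩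
  obtain ⟨hM, hMβ⟩ := mem_filter.1 hMβ
  refine ⟨M, ⟨hM, fun γ hγ hγM => ?_⟩, hMβ⟩
  by_contra hne
  refine (hmax γ (mem_filter.2 ⟨hγ, by simpa using add_mem hγM hMβ⟩)).not_gt ?_
  exact baseHeight_lt_of_sub_mem hb.linearIndepOn_int
    (hb.mem_addSubgroupClosure (mem_filter.1 hM).1) (hb.mem_addSubgroupClosure (mem_filter.1 hγ).1)
    (AddSubmonoid.closure_mono (coe_subset.2 hS) hγM) (Ne.symm hne)

lemma IsBase.pairInt_nonneg_of_isMaximalRoot (hb : P.IsBase Δ) (hS : S ⊆ Δ) {M : V}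
    (hM : P.IsMaximalRoot S M) {a : V} (ha : a ∈ S) : 0 ≤ P.pairInt M a := by
  by_contra! h
  obtain ⟨hMR, hMS⟩ := mem_filter.1 hM.1
  have haR := hb.subset (hS ha)
  have hMa : M + a ∈ P.posRootsOf S := mem_filter.2
    ⟨P.add_mem_roots haR hMR (hb.ne_neg hMR (AddSubmonoid.closure_mono (coe_subset.2 hS) hMS)
      (AddSubmonoid.subset_closure (hS ha))) h, add_mem hMS (AddSubmonoid.subset_closure ha)⟩
  have := hM.2 _ hMa (by simpa using AddSubmonoid.subset_closure ha)
  exact P.ne_zero a haR (by simpa using this)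

/-- At a simple root `v ∈ S` adjacent to the support of `M` but outside it, `⟨M, v^∨⟩` would be
negative. -/
lemma IsBase.baseCoord_pos_of_isMaximalRoot (hb : P.IsBase Δ) (hS : S ⊆ Δ)
    (hc : P.IsConnected S) {M : V} (hM : P.IsMaximalRoot S M) {a : V} (ha : a ∈ S) :
    0 < baseCoord Δ M a := by
  have hΔ := hb.linearIndepOn_int
  obtain ⟨hMR, hMS⟩ := mem_filter.1 hM.1
  have hMZ : M ∈ AddSubgroup.closure (S : Set V) := AddSubgroup.le_closure_toAddSubmonoid _ hMS
  have hMΔ := AddSubmonoid.closure_mono (coe_subset.2 hS) hMS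
  obtain ⟨x, hx, -⟩ := hb.exists_pairInt_pos hMR hMΔ
  have hxS : x ∈ S := mem_of_baseCoord_ne_zero hΔ hS hMZ hx.ne'
  by_contra hna
  obtain ⟨u, v, ⟨huS, hvS, huv⟩, hu, hv⟩ :=
    (hc.2 x hxS a ha).exists_rel_of_not (p := fun b => 0 < baseCoord Δ M b) hx hna
  have hMv : baseCoord Δ M v = 0 := le_antisymm (not_lt.1 hv) (hb.baseCoord_nonneg hMΔ v)
  have hneg : P.pairInt M v < 0 := by
    rw [P.pairInt_eq_sum_baseCoord hb.subset (hb.subset (hS hvS)) hMR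
      (hb.mem_addSubgroupClosure hMR)]
    refine sum_neg' (fun b hb' => ?_) ⟨u, hS huS, mul_neg_of_pos_of_neg hu ?_⟩
    · rcases eq_or_ne b v with rfl | hbv
      · rw [hMv, zero_mul]
      · exact mul_nonpos_of_nonneg_of_nonpos (hb.baseCoord_nonneg hMΔ b)
          (hb.pairInt_nonpos hb' (hS hvS) hbv)
    · have huv' : u ≠ v := fun h => hv (h ▸ hu)
      exact lt_of_le_of_ne (hb.pairInt_nonpos (hS huS) (hS hvS) huv') huv
  exact hneg.not_ge (hb.pairInt_nonneg_of_isMaximalRoot hS hM hvS)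

lemma IsBase.eq_of_isMaximalRoot (hb : P.IsBase Δ) (hS : S ⊆ Δ) (hc : P.IsConnected S)
    {M M' : V} (hM : P.IsMaximalRoot S M) (hM' : P.IsMaximalRoot S M') : M = M' := by
  have hΔ := hb.linearIndepOn_int
  by_contra hne
  obtain ⟨hMR, hMS⟩ := mem_filter.1 hM.1
  obtain ⟨hM'R, hM'S⟩ := mem_filter.1 hM'.1
  have hMZ : M ∈ AddSubgroup.closure (S : Set V) := AddSubgroup.le_closure_toAddSubmonoid _ hMS
  have hM'Z : M' ∈ AddSubgroup.closure (S : Set V) := AddSubgroup.le_closure_toAddSubmonoid _ hM'S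
  have hM'Δ := AddSubmonoid.closure_mono (coe_subset.2 hS) hM'S
  obtain ⟨a, ha, hMa⟩ :=
    hb.exists_pairInt_pos hMR (AddSubmonoid.closure_mono (coe_subset.2 hS) hMS)
  have haS : a ∈ S := mem_of_baseCoord_ne_zero hΔ hS hMZ ha.ne'
  have hpos : 0 < P.pairInt M' M := by
    rw [P.pairInt_eq_sum_baseCoord hb.subset hMR hM'R (hb.mem_addSubgroupClosure hM'R)]
    refine sum_pos' (fun b hbΔ => ?_)
      ⟨a, hS haS, mul_pos (hb.baseCoord_pos_of_isMaximalRoot hS hc hM' haS) hMa⟩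
    by_cases hbS : b ∈ S
    · exact mul_nonneg (hb.baseCoord_nonneg hM'Δ b) ((P.pairInt_nonneg_comm (hb.subset hbΔ) hMR).2
        (hb.pairInt_nonneg_of_isMaximalRoot hS hM hbS))
    · rw [baseCoord_eq_zero_of_mem_closure hΔ hS hM'Z hbS, zero_mul]
  have hsub := P.sub_mem_roots hMR hM'R (Ne.symm hne) hpos
  rcases hb.mem_posRootsOf_or_neg_mem hS (mem_filter.2 ⟨hsub, sub_mem hM'Z hMZ⟩) with h | h
  · exact hne (hM.2 M' hM'.1 (mem_filter.1 h).2).symm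
  · exact hne (hM'.2 M hM.1 (by simpa using (mem_filter.1 h).2))

lemma IsBase.exists_isHighestRoot (hb : P.IsBase Δ) (hS : S ⊆ Δ) (hc : P.IsConnected S) :
    ∃ ε, P.IsHighestRoot S ε := by
  obtain ⟨a, ha⟩ := hc.1
  obtain ⟨M, hM, -⟩ := hb.exists_isMaximalRoot hS
    (mem_filter.2 ⟨hb.subset (hS ha), AddSubmonoid.subset_closure ha⟩)
  refine ⟨M, hM.1, fun γ hγ => ?_⟩
  rcases hb.mem_posRootsOf_or_neg_mem hS hγ with h | h
  · obtain ⟨M', hM', hM'γ⟩ := hb.exists_isMaximalRoot hS h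
    rwa [hb.eq_of_isMaximalRoot hS hc hM hM']
  · simpa [sub_eq_add_neg] using add_mem (mem_filter.1 hM.1).2 (mem_filter.1 h).2

lemma IsBase.isHighestRoot_highestRoot (hb : P.IsBase Δ) (hS : S ⊆ Δ) (hc : P.IsConnected S) :
    P.IsHighestRoot S (P.highestRoot S) := by
  have h := hb.exists_isHighestRoot hS hc
  rw [highestRoot, dif_pos h]
  exact h.choose_spec

end HighestRoot

section Gamma

variable {P} {Δ S : Finset V}

lemma IsBase.pairInt_nonneg_of_isHighestRoot (hb : P.IsBase Δ) (hS : S ⊆ Δ) {ε : V}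
    (hε : P.IsHighestRoot S ε) {α : V} (hα : α ∈ P.posRootsOf S) : 0 ≤ P.pairInt α ε := by
  by_contra! h
  obtain ⟨hεR, hεS⟩ := mem_filter.1 hε.1
  obtain ⟨hαR, hαS⟩ := mem_filter.1 hα
  have hαΔ := AddSubmonoid.closure_mono (coe_subset.2 hS) hαS
  have hεΔ := AddSubmonoid.closure_mono (coe_subset.2 hS) hεS
  have hαε : α + ε ∈ P.rootsOf S := mem_filter.2
    ⟨P.add_mem_roots hεR hαR (hb.ne_neg hαR hαΔ hεΔ) h,
      AddSubgroup.le_closure_toAddSubmonoid _ (add_mem hαS hεS)⟩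
  have hneg := hε.2 _ hαε
  rw [sub_add_cancel_right] at hneg
  exact P.ne_zero α hαR (eq_zero_of_mem_closure_of_neg_mem hb.linearIndepOn_int hαΔ
    (AddSubmonoid.closure_mono (coe_subset.2 hS) hneg))

lemma IsBase.gamma_subset_posRootsOf (hb : P.IsBase Δ) (hS : S ⊆ Δ) (hc : P.IsConnected S) :
    P.gamma S ⊆ P.posRootsOf S := by
  intro α hα
  obtain ⟨hαS, hpos⟩ := mem_filter.1 hα
  have hε := hb.isHighestRoot_highestRoot hS hc
  refine (hb.mem_posRootsOf_or_neg_mem hS hαS).resolve_right fun hneg => ?_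
  have := hb.pairInt_nonneg_of_isHighestRoot hS hε hneg
  rw [P.pairInt_neg_left (mem_filter.1 hε.1).1 (mem_filter.1 hαS).1] at this
  omega

/-- Since `⟨a, ε^∨⟩ ≥ 0` for every `a ∈ S`, the expansion `⟨α, ε^∨⟩ = ∑ αₐ ⟨a, ε^∨⟩` vanishes
exactly when `α` is supported on the simple roots orthogonal to `ε`. -/
lemma IsBase.mem_posRootsOf_zeroPart_iff (hb : P.IsBase Δ) (hS : S ⊆ Δ) (hc : P.IsConnected S)
    {α : V} (hα : α ∈ P.posRootsOf S) :
    α ∈ P.posRootsOf (P.zeroPart S) ↔ P.pairInt α (P.highestRoot S) = 0 := by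
  have hΔ := hb.linearIndepOn_int
  have hε := hb.isHighestRoot_highestRoot hS hc
  obtain ⟨hαR, hαS⟩ := mem_filter.1 hα
  obtain ⟨hαZ, hαpos⟩ := (mem_addSubmonoidClosure_iff_baseCoord hΔ hS).1 hαS
  have hzΔ : P.zeroPart S ⊆ Δ := (filter_subset _ _).trans hS
  have hterm : ∀ a ∈ Δ, 0 ≤ baseCoord Δ α a * P.pairInt a (P.highestRoot S) := fun a haΔ => by
    by_cases haS : a ∈ S
    · exact mul_nonneg (hαpos a) (hb.pairInt_nonneg_of_isHighestRoot hS hε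
        (mem_filter.2 ⟨hb.subset haΔ, AddSubmonoid.subset_closure haS⟩))
    · rw [baseCoord_eq_zero_of_mem_closure hΔ hS hαZ haS, zero_mul]
  rw [P.pairInt_eq_sum_baseCoord hb.subset (mem_filter.1 hε.1).1 hαR
      (hb.mem_addSubgroupClosure hαR), sum_eq_zero_iff_of_nonneg hterm, posRootsOf, mem_filter,
    mem_addSubmonoidClosure_iff_baseCoord hΔ hzΔ, mem_addSubgroupClosure_iff_baseCoord hΔ hzΔ]
  refine ⟨fun ⟨_, ⟨_, hsupp⟩, _⟩ a _ => ?_, fun h => ⟨hαR, ⟨hb.mem_addSubgroupClosure hαR,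
    fun a ha => mem_filter.2 ⟨mem_of_baseCoord_ne_zero hΔ hS hαZ ha, ?_⟩⟩, hαpos⟩⟩
  · by_cases ha : baseCoord Δ α a = 0
    · rw [ha, zero_mul]
    · rw [(mem_filter.1 (hsupp ha)).2, mul_zero]
  · exact (mul_eq_zero.1 (h a (support_baseCoord_subset ha))).resolve_left ha

lemma IsBase.posRootsOf_eq_gamma_union (hb : P.IsBase Δ) (hS : S ⊆ Δ) (hc : P.IsConnected S) :
    P.posRootsOf S = P.gamma S ∪ P.posRootsOf (P.zeroPart S) := by
  ext α
  refine ⟨fun hα => ?_, fun hα => ?_⟩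
  · rcases (hb.pairInt_nonneg_of_isHighestRoot hS (hb.isHighestRoot_highestRoot hS hc) hα).lt_or_eq
      with h | h
    · exact mem_union_left _ (mem_filter.2 ⟨mem_filter.2 ⟨(mem_filter.1 hα).1,
        AddSubgroup.le_closure_toAddSubmonoid _ (mem_filter.1 hα).2⟩, h⟩)
    · exact mem_union_right _ ((hb.mem_posRootsOf_zeroPart_iff hS hc hα).2 h.symm)
  · rcases mem_union.1 hα with h | h
    · exact hb.gamma_subset_posRootsOf hS hc h
    · exact posRootsOf_mono (filter_subset _ _) h

lemma IsBase.disjoint_gamma_posRootsOf_zeroPart (hb : P.IsBase Δ) (hS : S ⊆ Δ)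
    (hc : P.IsConnected S) : Disjoint (P.gamma S) (P.posRootsOf (P.zeroPart S)) :=
  disjoint_left.2 fun _ hγ hz => (mem_filter.1 hγ).2.ne'
    ((hb.mem_posRootsOf_zeroPart_iff hS hc (posRootsOf_mono (filter_subset _ _) hz)).1 hz)

lemma IsBase.zeroPart_ssubset (hb : P.IsBase Δ) (hS : S ⊆ Δ) (hc : P.IsConnected S) :
    P.zeroPart S ⊂ S := by
  obtain ⟨hεR, hεS⟩ := mem_filter.1 (hb.isHighestRoot_highestRoot hS hc).1
  obtain ⟨a, ha, hpos⟩ :=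
    hb.exists_pairInt_pos hεR (AddSubmonoid.closure_mono (coe_subset.2 hS) hεS)
  refine (ssubset_iff_of_subset (filter_subset _ _)).2 ⟨a, ?_, fun h => hpos.ne' (mem_filter.1 h).2⟩
  exact mem_of_baseCoord_ne_zero hb.linearIndepOn_int hS
    (AddSubgroup.le_closure_toAddSubmonoid _ hεS) ha.ne'

end Gamma

section Cascade

variable {P} {Δ S : Finset V}

lemma IsBase.zeroPart_ssubset_of_mem_components (hb : P.IsBase Δ) (hS : S ⊆ Δ) {C : Finset V}
    (hC : C ∈ P.components S) : P.zeroPart C ⊂ S :=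
  Finset.ssubset_of_ssubset_of_subset (hb.zeroPart_ssubset ((subset_of_mem_components hC).trans hS)
    (isConnected_of_mem_components (hS.trans hb.subset) hC)) (subset_of_mem_components hC)

lemma IsBase.cascadeAux_eq_cascade (hb : P.IsBase Δ) (hS : S ⊆ Δ) {n : ℕ} (hn : S.card < n) :
    P.cascadeAux n S = P.cascade S := by
  induction S using Finset.strongInduction generalizing n with
  | H S ih =>
    obtain ⟨m, rfl⟩ : ∃ m, n = m + 1 := ⟨n - 1, by omega⟩
    rw [cascade, cascadeAux, cascadeAux]
    refine biUnion_congr rfl fun C hC => ?_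
    have hzS := hb.zeroPart_ssubset_of_mem_components hS hC
    have hcard := card_lt_card hzS
    rw [ih _ hzS (hzS.subset.trans hS) (by omega), ih _ hzS (hzS.subset.trans hS) hcard]

lemma IsBase.cascade_eq_biUnion (hb : P.IsBase Δ) (hS : S ⊆ Δ) :
    P.cascade S = (P.components S).biUnion fun C => insert C (P.cascade (P.zeroPart C)) := by
  rw [cascade, cascadeAux]
  refine biUnion_congr rfl fun C hC => ?_
  have hzS := hb.zeroPart_ssubset_of_mem_components hS hC
  rw [hb.cascadeAux_eq_cascade (hzS.subset.trans hS) (card_lt_card hzS)]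

theorem IsBase.isDisjointUnion_gamma_cascade (hb : P.IsBase Δ) (hS : S ⊆ Δ) :
    IsDisjointUnion P.gamma (P.cascade S) (P.posRootsOf S) := by
  induction S using Finset.strongInduction with
  | H S ih =>
    rw [hb.cascade_eq_biUnion hS, hb.posRootsOf_eq_biUnion_components hS]
    refine IsDisjointUnion.biUnion (fun C hC => ?_) (hb.pairwiseDisjoint_posRootsOf_components hS)
    have hCΔ := (subset_of_mem_components hC).trans hS
    have hc := isConnected_of_mem_components (hS.trans hb.subset) hC
    have hzS := hb.zeroPart_ssubset_of_mem_components hS hC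
    rw [hb.posRootsOf_eq_gamma_union hCΔ hc]
    exact (ih _ hzS (hzS.subset.trans hS)).insert (hb.disjoint_gamma_posRootsOf_zeroPart hCΔ hc)

end Cascade

end RootSystemData

variable {k V : Type*} [Field k] [CharZero k] [AddCommGroup V] [Module k V]

/-- Let `R` be a reduced root system with base `Π` and positive roots `R₊`,
and let `𝒦 = 𝒦(Π)` be the cascade.  Then `R₊` is the disjoint union of the sets
`Γ^K = {α ∈ R^K : ⟨α, ε_K^∨⟩ > 0}` for `K ∈ 𝒦`: each `Γ^K` is contained in `R₊` and every
positive root lies in `Γ^K` for exactly one `K ∈ 𝒦`. -/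
theorem posRoots_disjoint_union_of_gamma
    (P : RootSystemData k V) (Δ : Finset V) (hbase : P.IsBase Δ) :
    (∀ K ∈ P.cascade Δ, P.gamma K ⊆ P.posRoots Δ) ∧
    (∀ α ∈ P.posRoots Δ, ∃! K, K ∈ P.cascade Δ ∧ α ∈ P.gamma K) :=
  hbase.isDisjointUnion_gamma_cascade subset_rfl
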